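/- arXiv:2202.05444 — 7 statements merged into one kernel-verified Lean document; each statement's English description precedes it below -/
import Mathlib

section
/- Let v be a natural number, let c be a clause over v variables (a list of literals, where a literal is a pair (i, b) with i : Fin v and b : Bool), and let w, w* : Fin v → Bool be assignments. If w* satisfies the clause c (some literal (i,b) in c has w* i = b) but w does not satisfy c (every literal (i,b) in c has w i ≠ b), then there exists a literal (i,b) occurring in c such that w i ≠ w* i, and for any such index i the flipped assignment w' := Function.update w i (not (w i)) satisfies dist(w', w*) = dist(w, w*) - 1, where dist denotes Hamming distance. -/
/-- Hamming distance between two boolean assignments over `v` variables. -/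
def hamDist {v : ℕ} (w w' : Fin v → Bool) : ℕ :=
  (Finset.univ.filter fun i => w i ≠ w' i).card

/-- If `wstar` satisfies the clause `c` but `w` does not, then some literal `(i, b)` of `c`
has `w i ≠ wstar i`, and flipping any such coordinate decreases the Hamming distance
to `wstar` by exactly one. -/
theorem flip_decreases_dist {v : ℕ} (c : List (Fin v × Bool)) (w wstar : Fin v → Bool)
    (hsat : ∃ p ∈ c, wstar p.1 = p.2)
    (hunsat : ∀ p ∈ c, w p.1 ≠ p.2) :
    (∃ p ∈ c, w p.1 ≠ wstar p.1) ∧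
    (∀ p ∈ c, w p.1 ≠ wstar p.1 →
      hamDist (Function.update w p.1 (!(w p.1))) wstar = hamDist w wstar - 1) := by
  constructor
  · obtain ⟨p, hp, hps⟩ := hsat
    exact ⟨p, hp, fun h => hunsat p hp (h.trans hps)⟩
  · intro p hp hne
    set i := p.1
    have hset : (Finset.univ.filter fun j => Function.update w i (!(w i)) j ≠ wstar j)
        = (Finset.univ.filter fun j => w j ≠ wstar j).erase i := by
      ext j
      simp only [Finset.mem_filter, Finset.mem_erase, Finset.mem_univ, true_and]
      rcases eq_or_ne j i with rfl | hji
      · simp only [Function.update_self]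
        cases hwi : w i <;> cases hws : wstar i <;> simp_all
      · rw [Function.update_of_ne hji]
        tauto
    have himem : i ∈ Finset.univ.filter fun j => w j ≠ wstar j := by
      simp [hne]
    unfold hamDist
    rw [hset, Finset.card_erase_of_mem himem]
end

section
/- Let v be a natural number and φ a CNF formula over v variables (a list of clauses). Suppose w* : Fin v → Bool satisfies φ and is the unique satisfying assignment (every assignment satisfying φ equals w*). Then for every assignment w : Fin v → Bool, setting n = dist(w, w*), there exists a sequence of assignments σ : Fin (n+1) → (Fin v → Bool) with σ 0 = w, σ n = w*, and such that for each t < n there is a clause c of φ that σ t does not satisfy and a literal (i, b) occurring in c with σ (t+1) = Function.update (σ t) i (not (σ t i)). In particular, the solution w* can be reached from w in exactly dist(w, w*) single-variable flips, each flipping a variable of a currently unsatisfied clause. -/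
/-- An assignment satisfies a clause (a list of literals) iff some literal `(i, b)`
in it has `w i = b`. -/
def satClause {v : ℕ} (w : Fin v → Bool) (c : List (Fin v × Bool)) : Prop :=
  ∃ p ∈ c, w p.1 = p.2

/-- An assignment satisfies a CNF formula (a list of clauses) iff it satisfies
every clause. -/
def satCNF {v : ℕ} (w : Fin v → Bool) (φ : List (List (Fin v × Bool))) : Prop :=
  ∀ c ∈ φ, satClause w c

lemma hamDist_zero {v : ℕ} {w wstar : Fin v → Bool} (h : hamDist w wstar = 0) : w = wstar := by
  funext i
  by_contra hi
  have : i ∈ Finset.univ.filter fun j => w j ≠ wstar j := by simp [hi]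
  have := Finset.card_pos.mpr ⟨i, this⟩
  simp only [hamDist] at h
  omega

lemma hamDist_flip {v : ℕ} {w wstar : Fin v → Bool} {i : Fin v} (h : w i ≠ wstar i) :
    hamDist (Function.update w i (!(w i))) wstar + 1 = hamDist w wstar := by
  have hset : (Finset.univ.filter fun j => Function.update w i (!(w i)) j ≠ wstar j)
      = (Finset.univ.filter fun j => w j ≠ wstar j).erase i := by
    ext j
    rcases eq_or_ne j i with rfl | hj
    · have hb : (!(w j)) = wstar j := by revert h; cases w j <;> cases wstar j <;> simp
      simp [hb]
    · simp [Function.update_of_ne hj, hj]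
  have hi : i ∈ Finset.univ.filter fun j => w j ≠ wstar j := by simp [h]
  unfold hamDist
  rw [hset, Finset.card_erase_add_one hi]

lemma path_aux {v : ℕ} (φ : List (List (Fin v × Bool))) (wstar : Fin v → Bool)
    (hsat : satCNF wstar φ)
    (huniq : ∀ w : Fin v → Bool, satCNF w φ → w = wstar) :
    ∀ n : ℕ, ∀ w : Fin v → Bool, hamDist w wstar = n →
    ∃ σ : Fin (n + 1) → (Fin v → Bool),
      σ 0 = w ∧
      σ (Fin.last n) = wstar ∧
      ∀ t : Fin n,
        ∃ c ∈ φ, ¬ satClause (σ t.castSucc) c ∧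
          ∃ p ∈ c, σ t.succ = Function.update (σ t.castSucc) p.1 (!(σ t.castSucc p.1)) := by
  intro n
  induction n with
  | zero =>
    intro w h
    exact ⟨fun _ => w, rfl, (hamDist_zero h).symm ▸ rfl, fun t => t.elim0⟩
  | succ n ih =>
    intro w h
    -- w ≠ wstar, so some clause is unsatisfied
    have hwne : w ≠ wstar := fun he => by simp [he, hamDist] at h
    have hnotsat : ¬ satCNF w φ := fun hs => hwne (huniq w hs)
    simp only [satCNF, not_forall] at hnotsat
    obtain ⟨c, hc, hcns⟩ := hnotsat
    obtain ⟨p, hp, hpval⟩ := hsat c hc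
    have hwp : w p.1 ≠ wstar p.1 := by
      intro he
      exact hcns ⟨p, hp, he.trans hpval⟩
    have hdist' : hamDist (Function.update w p.1 (!(w p.1))) wstar = n := by
      have := hamDist_flip hwp
      omega
    obtain ⟨σ', h0, hlast, hstep⟩ := ih _ hdist'
    refine ⟨Fin.cons w σ', Fin.cons_zero _ _, ?_, ?_⟩
    · have : Fin.last (n + 1) = Fin.succ (Fin.last n) := rfl
      rw [this, Fin.cons_succ, hlast]
    · intro t
      refine Fin.cases ?_ ?_ t
      · -- t = 0
        refine ⟨c, hc, ?_, p, hp, ?_⟩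
        · simpa only [Fin.castSucc_zero, Fin.cons_zero] using hcns
        · simp only [Fin.castSucc_zero, Fin.cons_zero, Fin.succ_zero_eq_one]
          have h1 : (1 : Fin (n + 2)) = Fin.succ 0 := rfl
          rw [h1, Fin.cons_succ, h0]
      · intro j
        obtain ⟨c', hc', hns', p', hp', heq'⟩ := hstep j
        refine ⟨c', hc', ?_, p', hp', ?_⟩
        · simpa only [← Fin.succ_castSucc, Fin.cons_succ] using hns'
        · simp only [← Fin.succ_castSucc, Fin.cons_succ]
          exact heq'

/-- If `wstar` is the unique satisfying assignment of the CNF formula `φ`, then from any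
assignment `w` one can reach `wstar` in exactly `hamDist w wstar` single-variable flips,
each flipping a variable occurring in a clause of `φ` that is currently unsatisfied. -/
theorem path_to_solution {v : ℕ} (φ : List (List (Fin v × Bool))) (wstar : Fin v → Bool)
    (hsat : satCNF wstar φ)
    (huniq : ∀ w : Fin v → Bool, satCNF w φ → w = wstar)
    (w : Fin v → Bool) :
    ∃ σ : Fin (hamDist w wstar + 1) → (Fin v → Bool),
      σ 0 = w ∧
      σ (Fin.last (hamDist w wstar)) = wstar ∧
      ∀ t : Fin (hamDist w wstar),
        ∃ c ∈ φ, ¬ satClause (σ t.castSucc) c ∧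
          ∃ p ∈ c, σ t.succ = Function.update (σ t.castSucc) p.1 (!(σ t.castSucc p.1)) := by
  exact path_aux φ wstar hsat huniq (hamDist w wstar) w rfl
end

section
/- Let v ≥ 1 and H, r be natural numbers with H ≥ v and r ≥ 1, let φ be a CNF formula over v variables with a unique satisfying assignment w* : Fin v → Bool, and fix a starting assignment w₀ : Fin v → Bool. Call a sequence (w_0, w_1, …, w_T) of assignments admissible if w_0 = w₀, T ≤ H, for every t < T the assignment w_t is distinct from w*, w_{t+1} is obtained from w_t by flipping exactly one coordinate i occurring in some clause of φ not satisfied by w_t, and the terminal condition holds (w_T = w* or T = H). Then the maximum over all admissible sequences of the payoff ((1 : ℝ) - (T + dist(w_T, w*)) / (H + v))^r exists and equals ((1 : ℝ) - dist(w₀, w*) / (H + v))^r. -/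
/-!
A flip changes the Hamming distance by at most one, so along any admissible trajectory
`dist(w₀, w*) ≤ T + dist(w_T, w*)`, and the payoff is monotone in `T + dist(w_T, w*)`.
Conversely, a clause violated by `w ≠ w*` is satisfied by `w*`, so it contains a variable
on which `w` and `w*` disagree; flipping such variables greedily reaches `w*` in exactly
`dist(w₀, w*) ≤ v ≤ H` steps, which attains the bound.
-/

open Function Finset

theorem hamDist_eq_hammingDist {v : ℕ} (w w' : Fin v → Bool) :
    hamDist w w' = hammingDist w w' :=
  rfl

section HammingUpdate

variable {ι : Type*} [Fintype ι] [DecidableEq ι] {β : ι → Type*} [∀ i, DecidableEq (β i)]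

theorem hammingDist_update_left_le_one (x : ∀ i, β i) (i : ι) (b : β i) :
    hammingDist (update x i b) x ≤ 1 := by
  refine (card_le_card fun j hj => ?_).trans (card_singleton i).le
  by_contra hji
  simp only [mem_filter, mem_univ, true_and] at hj
  exact hj (update_of_ne (notMem_singleton.mp hji) b x)

theorem hammingDist_update_add_one_of_ne {x y : ∀ i, β i} {i : ι} (hi : x i ≠ y i) :
    hammingDist (update x i (y i)) y + 1 = hammingDist x y := by
  have hmem : i ∈ ({j | x j ≠ y j} : Finset ι) := by simpa using hi
  have herase :
      ({j | update x i (y i) j ≠ y j} : Finset ι) = ({j | x j ≠ y j} : Finset ι).erase i := by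
    ext j
    rcases eq_or_ne j i with rfl | hji
    · simp
    · simp [hji]
  rw [hammingDist, herase, card_erase_add_one hmem, hammingDist]

end HammingUpdate

theorem hammingDist_le_of_steps {ι : Type*} [Fintype ι] {β : ι → Type*}
    [∀ i, DecidableEq (β i)] {T : ℕ} (σ : Fin (T + 1) → ∀ i, β i)
    (hstep : ∀ t : Fin T, hammingDist (σ t.castSucc) (σ t.succ) ≤ 1) :
    hammingDist (σ 0) (σ (Fin.last T)) ≤ T := by
  suffices h : ∀ t : Fin (T + 1), hammingDist (σ 0) (σ t) ≤ t by simpa using h (Fin.last T)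
  intro t
  induction t using Fin.induction with
  | zero => simp
  | succ t ih =>
    calc hammingDist (σ 0) (σ t.succ)
        ≤ hammingDist (σ 0) (σ t.castSucc) + hammingDist (σ t.castSucc) (σ t.succ) :=
          hammingDist_triangle _ _ _
      _ ≤ t.succ := by
          have := hstep t
          simp only [Fin.val_succ, Fin.val_castSucc] at ih ⊢
          omega

section FlipDynamics

variable {v : ℕ} (φ : List (List (Fin v × Bool)))

def IsFlipStep (w w' : Fin v → Bool) : Prop :=
  ∃ c ∈ φ, ¬ satClause w c ∧ ∃ p ∈ c, w' = update w p.1 (!w p.1)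

variable {φ}

theorem IsFlipStep.hammingDist_le_one {w w' : Fin v → Bool} (h : IsFlipStep φ w w') :
    hammingDist w w' ≤ 1 := by
  obtain ⟨-, -, -, p, -, rfl⟩ := h
  rw [hammingDist_comm]
  exact hammingDist_update_left_le_one w p.1 _

theorem exists_isFlipStep_toward {w wstar : Fin v → Bool} (hsat : satCNF wstar φ)
    (hw : ¬ satCNF w φ) :
    ∃ i, w i ≠ wstar i ∧ IsFlipStep φ w (update w i (wstar i)) := by
  obtain ⟨c, hc, hwc⟩ : ∃ c ∈ φ, ¬ satClause w c := by simpa [satCNF] using hw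
  obtain ⟨p, hp, hstar⟩ := hsat c hc
  have hne : w p.1 ≠ wstar p.1 := fun h => hwc ⟨p, hp, h.trans hstar⟩
  refine ⟨p.1, hne, c, hc, hwc, p, hp, ?_⟩
  rw [Bool.eq_not.mpr hne.symm]

theorem exists_flip_path_to_solution {wstar : Fin v → Bool} (hsat : satCNF wstar φ)
    (huniq : ∀ w : Fin v → Bool, satCNF w φ → w = wstar) (w : Fin v → Bool) :
    ∃ σ : Fin (hammingDist w wstar + 1) → (Fin v → Bool), σ 0 = w ∧
      (∀ t : Fin (hammingDist w wstar),
        σ t.castSucc ≠ wstar ∧ IsFlipStep φ (σ t.castSucc) (σ t.succ)) ∧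
      σ (Fin.last _) = wstar := by
  generalize hd : hammingDist w wstar = d
  induction d generalizing w with
  | zero => exact ⟨fun _ => w, rfl, fun t => t.elim0, hammingDist_eq_zero.mp hd⟩
  | succ d ih =>
    have hw : w ≠ wstar := hammingDist_ne_zero.mp (by omega)
    obtain ⟨i, hi, hflip⟩ := exists_isFlipStep_toward hsat fun h => hw (huniq w h)
    obtain ⟨σ, hσ0, hσstep, hσlast⟩ :=
      ih (update w i (wstar i)) (by have := hammingDist_update_add_one_of_ne hi; omega)
    refine ⟨Fin.cons w σ, rfl, fun t => ?_, hσlast⟩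
    induction t using Fin.cases with
    | zero => exact ⟨hw, by simpa [hσ0] using hflip⟩
    | succ t => simpa only [← Fin.succ_castSucc, Fin.cons_succ] using hσstep t

end FlipDynamics

theorem one_sub_div_pow_le_one_sub_div_pow {a b c : ℝ} (r : ℕ) (hab : a ≤ b) (hbc : b ≤ c)
    (hc : 0 ≤ c) : (1 - b / c) ^ r ≤ (1 - a / c) ^ r :=
  pow_le_pow_left₀ (sub_nonneg.mpr (div_le_one_of_le₀ hbc hc))
    (sub_le_sub_left (div_le_div_of_nonneg_right hab hc) 1) r

theorem optimal_value_general {v H r : ℕ} (hH : v ≤ H)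
    (φ : List (List (Fin v × Bool))) (wstar : Fin v → Bool)
    (hsat : satCNF wstar φ)
    (huniq : ∀ w : Fin v → Bool, satCNF w φ → w = wstar)
    (w₀ : Fin v → Bool) :
    IsGreatest
      {x : ℝ | ∃ (T : ℕ) (σ : Fin (T + 1) → (Fin v → Bool)),
        σ 0 = w₀ ∧ T ≤ H ∧
        (∀ t : Fin T, σ t.castSucc ≠ wstar ∧
          ∃ c ∈ φ, ¬ satClause (σ t.castSucc) c ∧
            ∃ p ∈ c, σ t.succ = Function.update (σ t.castSucc) p.1 (!(σ t.castSucc p.1))) ∧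
        (σ (Fin.last T) = wstar ∨ T = H) ∧
        x = ((1 : ℝ) - ((T : ℝ) + (hamDist (σ (Fin.last T)) wstar : ℝ)) / ((H : ℝ) + (v : ℝ))) ^ r}
      (((1 : ℝ) - (hamDist w₀ wstar : ℝ) / ((H : ℝ) + (v : ℝ))) ^ r) := by
  have hdist_le (w : Fin v → Bool) : hammingDist w wstar ≤ v := by
    simpa using hammingDist_le_card_fintype (x := w) (y := wstar)
  constructor
  · obtain ⟨σ, hσ0, hσstep, hσlast⟩ := exists_flip_path_to_solution hsat huniq w₀
    refine ⟨_, σ, hσ0, (hdist_le w₀).trans hH, hσstep, .inl hσlast, ?_⟩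
    simp [hamDist_eq_hammingDist, hσlast]
  · rintro x ⟨T, σ, rfl, hT, hstep, -, rfl⟩
    have hmoves := hammingDist_le_of_steps σ fun t => IsFlipStep.hammingDist_le_one (hstep t).2
    have htri := hammingDist_triangle (σ 0) (σ (Fin.last T)) wstar
    have hlast := hdist_le (σ (Fin.last T))
    simp only [hamDist_eq_hammingDist]
    refine one_sub_div_pow_le_one_sub_div_pow r ?_ ?_ (by positivity) <;> norm_cast <;> omega

/-- The optimal value of the constructed MDP: the maximum over all admissible trajectories
starting from `w₀` of the terminal payoff `(1 - (T + dist(w_T, wstar))/(H + v))^r` exists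
and equals `g(0, w₀) = (1 - dist(w₀, wstar)/(H + v))^r`. -/
theorem optimal_value {v H r : ℕ} (hv : 1 ≤ v) (hH : v ≤ H) (hr : 1 ≤ r)
    (φ : List (List (Fin v × Bool))) (wstar : Fin v → Bool)
    (hsat : satCNF wstar φ)
    (huniq : ∀ w : Fin v → Bool, satCNF w φ → w = wstar)
    (w₀ : Fin v → Bool) :
    IsGreatest
      {x : ℝ | ∃ (T : ℕ) (σ : Fin (T + 1) → (Fin v → Bool)),
        σ 0 = w₀ ∧ T ≤ H ∧
        (∀ t : Fin T, σ t.castSucc ≠ wstar ∧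
          ∃ c ∈ φ, ¬ satClause (σ t.castSucc) c ∧
            ∃ p ∈ c, σ t.succ = Function.update (σ t.castSucc) p.1 (!(σ t.castSucc p.1))) ∧
        (σ (Fin.last T) = wstar ∨ T = H) ∧
        x = ((1 : ℝ) - ((T : ℝ) + (hamDist (σ (Fin.last T)) wstar : ℝ)) / ((H : ℝ) + (v : ℝ))) ^ r}
      (((1 : ℝ) - (hamDist w₀ wstar : ℝ) / ((H : ℝ) + (v : ℝ))) ^ r) :=
  optimal_value_general hH φ wstar hsat huniq w₀
end

section
/- There exists N : ℕ such that for every natural number v ≥ N, setting r := ⌈Real.sqrt v / Real.log v⌉ (ceiling as a natural number), the following holds: for every real d with (v : ℝ)^r ≤ d ≤ (v : ℝ)^(2*r), one has d^(Real.log d / (32 * Real.log (Real.log d))) ≤ (v : ℝ)^((r : ℝ)^2 / 4). -/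
/-- Quasi-polynomial runtime bound: for large enough `v`, with `r = ⌈√v / log v⌉` and any
feature dimension `d` with `v^r ≤ d ≤ v^(2r)`, one has
`d^(log d / (32 log log d)) ≤ v^(r²/4)`. -/
theorem quasipoly_runtime_bound :
    ∃ N : ℕ, ∀ v : ℕ, N ≤ v →
      ∀ d : ℝ,
        (v : ℝ) ^ (⌈Real.sqrt v / Real.log v⌉₊) ≤ d →
        d ≤ (v : ℝ) ^ (2 * ⌈Real.sqrt v / Real.log v⌉₊) →
        d ^ (Real.log d / (32 * Real.log (Real.log d))) ≤
          (v : ℝ) ^ ((⌈Real.sqrt v / Real.log v⌉₊ : ℝ) ^ 2 / 4) := by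
  use 3
  intro v hv d hd1 hd2
  set r := ⌈Real.sqrt v / Real.log v⌉₊ with hr
  have hv3 : (3:ℝ) ≤ v := by exact_mod_cast hv
  have hv1 : (1:ℝ) < v := by linarith
  have hv0 : (0:ℝ) < v := by linarith
  have hW : 0 < Real.log v := Real.log_pos hv1
  have hr1 : 1 ≤ r := Nat.one_le_ceil_iff.mpr (div_pos (Real.sqrt_pos.mpr hv0) hW)
  have hrW : Real.sqrt v ≤ (r:ℝ) * Real.log v := by
    rw [← div_le_iff₀ hW]
    exact Nat.le_ceil _
  have hvr : (v:ℝ) ≤ (v:ℝ)^r := le_self_pow₀ (le_of_lt hv1) (by omega)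
  have hd0 : (1:ℝ) < d := lt_of_lt_of_le (lt_of_lt_of_le hv1 hvr) hd1
  have hdpos : (0:ℝ) < d := by linarith
  have hL : (r:ℝ) * Real.log v ≤ Real.log d := by
    have := Real.log_le_log (by positivity) hd1
    rwa [Real.log_pow] at this
  have hL2 : Real.log d ≤ 2 * (r:ℝ) * Real.log v := by
    have := Real.log_le_log hdpos hd2
    rw [Real.log_pow] at this
    push_cast at this
    linarith
  have hsv : Real.sqrt v ≤ Real.log d := le_trans hrW hL
  have hLL : Real.log v / 2 ≤ Real.log (Real.log d) := by
    have h0 : (0:ℝ) < Real.sqrt v := Real.sqrt_pos.mpr hv0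
    have := Real.log_le_log h0 hsv
    rwa [Real.log_sqrt (le_of_lt hv0)] at this
  have hLLpos : 0 < Real.log (Real.log d) := lt_of_lt_of_le (by linarith) hLL
  rw [Real.rpow_def_of_pos hdpos, Real.rpow_def_of_pos hv0]
  apply Real.exp_le_exp.mpr
  have hR1 : (1:ℝ) ≤ (r:ℝ) := by exact_mod_cast hr1
  have hLpos : 0 < Real.log d := Real.log_pos hd0
  rw [← mul_div_assoc, div_le_iff₀ (by positivity)]
  nlinarith [mul_le_mul hL2 hL2 (le_of_lt hLpos) (by positivity : (0:ℝ) ≤ 2*(r:ℝ)*Real.log v),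
    mul_le_mul_of_nonneg_left hLL (by positivity : (0:ℝ) ≤ 8*(r:ℝ)^2*Real.log v)]
end

section
/- Let m ≥ 0 and q ≥ 1 be natural numbers. There exists N : ℕ such that for every natural number v ≥ N, setting r := ⌈Real.sqrt ((16*q : ℝ)^(m+2) * (Real.log v)^m)⌉ (ceiling as a natural number), the following holds: for every real d with (v : ℝ)^r ≤ d ≤ (v : ℝ)^(2*r), one has (r : ℝ)^(m+2) ≥ ((8*q : ℝ))^(m+2) * (Real.log d)^m, and consequently (r : ℝ) ≥ 8*q * (Real.log d)^((m : ℝ)/(m+2)). -/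
/-- Lower-bounding `r` in terms of the feature dimension `d` in the general reduction:
for large enough `v`, with `r = ⌈√((16q)^(m+2) (log v)^m)⌉` and any `d` with
`v^r ≤ d ≤ v^(2r)`, one has `r^(m+2) ≥ (8q)^(m+2) (log d)^m` and consequently
`r ≥ 8q (log d)^(m/(m+2))`. -/
theorem general_r_lower_bound (m q : ℕ) (hq : 1 ≤ q) :
    ∃ N : ℕ, ∀ v : ℕ, N ≤ v →
      ∀ d : ℝ,
        (v : ℝ) ^ (⌈Real.sqrt ((16 * q : ℝ) ^ (m + 2) * (Real.log v) ^ m)⌉₊) ≤ d →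
        d ≤ (v : ℝ) ^ (2 * ⌈Real.sqrt ((16 * q : ℝ) ^ (m + 2) * (Real.log v) ^ m)⌉₊) →
        ((⌈Real.sqrt ((16 * q : ℝ) ^ (m + 2) * (Real.log v) ^ m)⌉₊ : ℝ) ^ (m + 2) ≥
            (8 * q : ℝ) ^ (m + 2) * (Real.log d) ^ m) ∧
          ((⌈Real.sqrt ((16 * q : ℝ) ^ (m + 2) * (Real.log v) ^ m)⌉₊ : ℝ) ≥
            8 * q * (Real.log d) ^ ((m : ℝ) / ((m : ℝ) + 2))) := by
  refine ⟨3, fun v hv d hd1 hd2 => ?_⟩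
  have hq1 : (1 : ℝ) ≤ q := by exact_mod_cast hq
  have hv1 : (1 : ℝ) < (v : ℝ) := by exact_mod_cast (by omega : 1 < v)
  have hL0 : 0 < Real.log v := Real.log_pos hv1
  set S : ℝ := (16 * q : ℝ) ^ (m + 2) * (Real.log v) ^ m with hSdef
  set r : ℕ := ⌈Real.sqrt S⌉₊ with hrdef
  have h16 : (0 : ℝ) < 16 * q := by nlinarith
  have hS0 : 0 < S := mul_pos (pow_pos h16 _) (pow_pos hL0 m)
  have hr0 : 0 < r := Nat.ceil_pos.mpr (Real.sqrt_pos.mpr hS0)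
  have hr0' : (0 : ℝ) < r := by exact_mod_cast hr0
  have hrS : S ≤ (r : ℝ) ^ 2 := by
    calc S = Real.sqrt S ^ 2 := (Real.sq_sqrt hS0.le).symm
      _ ≤ (r : ℝ) ^ 2 := pow_le_pow_left₀ (Real.sqrt_nonneg S) (Nat.le_ceil _) 2
  have hd0 : (1 : ℝ) ≤ d := le_trans (one_le_pow₀ hv1.le) hd1
  have hld : 0 ≤ Real.log d := Real.log_nonneg hd0
  have hlog : Real.log d ≤ 2 * r * Real.log v := by
    have h := Real.log_le_log (by linarith) hd2
    rw [Real.log_pow] at h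
    push_cast at h ⊢
    linarith
  have h8q0 : (0 : ℝ) ≤ 8 * q := by linarith
  have hmain : (8 * q : ℝ) ^ (m + 2) * (Real.log d) ^ m ≤ (r : ℝ) ^ (m + 2) := by
    have h2 : (8 * q : ℝ) ^ (m + 2) * 2 ^ m ≤ (16 * q) ^ (m + 2) := by
      have he : (16 * q : ℝ) ^ (m + 2) = 2 ^ (m + 2) * (8 * q) ^ (m + 2) := by
        rw [← mul_pow]; ring_nf
      have h2m : (2 : ℝ) ^ m ≤ 2 ^ (m + 2) := pow_le_pow_right₀ (by norm_num) (by omega)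
      rw [he]
      have := pow_nonneg h8q0 (m + 2)
      nlinarith
    calc (8 * q : ℝ) ^ (m + 2) * (Real.log d) ^ m
        ≤ (8 * q : ℝ) ^ (m + 2) * (2 * r * Real.log v) ^ m := by
          exact mul_le_mul_of_nonneg_left (pow_le_pow_left₀ hld hlog m)
            (pow_nonneg h8q0 _)
      _ = ((8 * q : ℝ) ^ (m + 2) * 2 ^ m) * ((Real.log v) ^ m * (r : ℝ) ^ m) := by
          rw [mul_pow, mul_pow]; ring
      _ ≤ (16 * q : ℝ) ^ (m + 2) * ((Real.log v) ^ m * (r : ℝ) ^ m) := by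
          exact mul_le_mul_of_nonneg_right h2
            (mul_nonneg (pow_nonneg hL0.le _) (pow_nonneg hr0'.le _))
      _ = S * (r : ℝ) ^ m := by rw [hSdef]; ring
      _ ≤ (r : ℝ) ^ 2 * (r : ℝ) ^ m := by
          exact mul_le_mul_of_nonneg_right hrS (pow_nonneg hr0'.le _)
      _ = (r : ℝ) ^ (m + 2) := by rw [← pow_add]; ring_nf
  refine ⟨hmain, ?_⟩
  have hpow : (8 * q * (Real.log d) ^ ((m : ℝ) / ((m : ℝ) + 2))) ^ (m + 2)
      = (8 * q : ℝ) ^ (m + 2) * (Real.log d) ^ m := by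
    rw [mul_pow, ← Real.rpow_natCast ((Real.log d) ^ ((m : ℝ) / ((m : ℝ) + 2))) (m + 2),
      ← Real.rpow_mul hld]
    have hne : (m : ℝ) + 2 ≠ 0 := by positivity
    have : (m : ℝ) / ((m : ℝ) + 2) * ((m + 2 : ℕ) : ℝ) = (m : ℝ) := by
      push_cast
      field_simp
    rw [this, Real.rpow_natCast]
  have hA0 : 0 ≤ 8 * q * (Real.log d) ^ ((m : ℝ) / ((m : ℝ) + 2)) :=
    mul_nonneg h8q0 (Real.rpow_nonneg hld _)
  have := (pow_le_pow_iff_left₀ hA0 hr0'.le (by omega : m + 2 ≠ 0)).mp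
    (by rw [hpow]; exact hmain)
  exact this
end

section
/- Let m ≥ 0 and q ≥ 1 be natural numbers. There exists N : ℕ such that for every natural number v ≥ N, setting r := ⌈Real.sqrt ((16*q : ℝ)^(m+2) * (Real.log v)^m)⌉ (ceiling as a natural number), the following holds: for every real d with (v : ℝ)^r ≤ d ≤ (v : ℝ)^(2*r), one has (v : ℝ)^((r : ℝ)^2/4) ≥ d^(q * (Real.log d)^((m : ℝ)/(m+2))). -/
/-!
Write `L = log v`, `X = log d` and `b = m/(m+2)`. Taking logarithms, the claim is
`q X^(1+b) ≤ L r² / 4`. The constraint on `d` gives `r L ≤ X ≤ 2 r L`, so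
`q X^(1+b) ≤ 4 q (r L)^(1+b)`, and the choice of `r` makes `r^(1-b) = r^(2/(m+2)) ≥ 16 q L^b`,
which absorbs the factor `16 q L^b` into `r^(1-b)` and leaves `r² L / 4`.
-/

open Real

lemma sqrt_pow_mul_pow_rpow (m : ℕ) {B L : ℝ} (hB : 0 ≤ B) (hL : 0 ≤ L) :
    √(B ^ (m + 2) * L ^ m) ^ (1 - (m : ℝ) / (m + 2)) = B * L ^ ((m : ℝ) / (m + 2)) := by
  have hm : (0 : ℝ) < m + 2 := by positivity
  have hexp : (1 : ℝ) / 2 * (1 - m / (m + 2)) = 1 / (m + 2) := by field_simp; ring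
  rw [sqrt_eq_rpow, ← rpow_mul (by positivity), hexp, mul_rpow (by positivity) (by positivity),
    ← rpow_natCast B, ← rpow_natCast L, ← rpow_mul hB, ← rpow_mul hL]
  push_cast
  rw [mul_one_div_cancel hm.ne', rpow_one, mul_one_div]

lemma log_mem_Icc_of_pow_le {v d : ℝ} (hv : 0 < v) {r : ℕ} (hlow : v ^ r ≤ d)
    (hupp : d ≤ v ^ (2 * r)) : r * log v ≤ log d ∧ log d ≤ 2 * r * log v := by
  have hd : 0 < d := (pow_pos hv r).trans_le hlow
  constructor
  · simpa only [log_pow] using log_le_log (pow_pos hv r) hlow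
  · simpa only [log_pow, Nat.cast_mul, Nat.cast_ofNat] using log_le_log hd hupp

lemma mul_mul_rpow_le_mul_sq_div_four {b q L r X : ℝ} (hb₀ : 0 ≤ b) (hb₁ : b ≤ 1) (hq : 0 ≤ q)
    (hL : 0 ≤ L) (hr : 0 ≤ r) (hX₀ : 0 ≤ X) (hX : X ≤ 2 * r * L)
    (hr_large : 16 * q * L ^ b ≤ r ^ (1 - b)) :
    X * (q * X ^ b) ≤ L * (r ^ 2 / 4) := by
  have hrL : 0 ≤ r * L := mul_nonneg hr hL
  have hXb : X ^ b ≤ 2 * (r ^ b * L ^ b) :=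
    calc X ^ b ≤ (2 * r * L) ^ b := rpow_le_rpow hX₀ hX hb₀
      _ = 2 ^ b * (r ^ b * L ^ b) := by rw [mul_assoc, mul_rpow zero_le_two hrL, mul_rpow hr hL]
      _ ≤ 2 * (r ^ b * L ^ b) := by
        gcongr
        exact rpow_le_self_of_one_le one_le_two hb₁
  have hr_split : r ^ (1 - b) * r ^ b = r := by
    rw [← rpow_add' hr (by norm_num), sub_add_cancel, rpow_one]
  calc X * (q * X ^ b) ≤ 2 * r * L * (q * (2 * (r ^ b * L ^ b))) := by gcongr
    _ = 16 * q * L ^ b * r ^ b * (r * L) / 4 := by ring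
    _ ≤ r ^ (1 - b) * r ^ b * (r * L) / 4 := by gcongr
    _ = L * (r ^ 2 / 4) := by rw [hr_split]; ring

theorem general_runtime_bound_general (m q : ℕ) :
    ∃ N : ℕ, ∀ v : ℕ, N ≤ v →
      ∀ d : ℝ,
        (v : ℝ) ^ (⌈Real.sqrt ((16 * q : ℝ) ^ (m + 2) * (Real.log v) ^ m)⌉₊) ≤ d →
        d ≤ (v : ℝ) ^ (2 * ⌈Real.sqrt ((16 * q : ℝ) ^ (m + 2) * (Real.log v) ^ m)⌉₊) →
        (v : ℝ) ^ ((⌈Real.sqrt ((16 * q : ℝ) ^ (m + 2) * (Real.log v) ^ m)⌉₊ : ℝ) ^ 2 / 4) ≥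
          d ^ ((q : ℝ) * (Real.log d) ^ ((m : ℝ) / ((m : ℝ) + 2))) := by
  refine ⟨1, fun v hv d hlow hupp => ?_⟩
  set L := log v
  set r := ⌈√((16 * q : ℝ) ^ (m + 2) * L ^ m)⌉₊
  have hv₀ : (0 : ℝ) < v := by exact_mod_cast hv
  have hL : 0 ≤ L := log_nonneg (by exact_mod_cast hv)
  have hd : 0 < d := (pow_pos hv₀ r).trans_le hlow
  obtain ⟨hX_low, hX_upp⟩ := log_mem_Icc_of_pow_le hv₀ hlow hupp
  have hb₁ : (m : ℝ) / (m + 2) ≤ 1 := (div_le_one (by positivity)).2 (by linarith)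
  have hr_large : 16 * q * L ^ ((m : ℝ) / (m + 2)) ≤ (r : ℝ) ^ (1 - (m : ℝ) / (m + 2)) := by
    rw [← sqrt_pow_mul_pow_rpow m (by positivity) hL]
    exact rpow_le_rpow (sqrt_nonneg _) (Nat.le_ceil _) (sub_nonneg.2 hb₁)
  rw [ge_iff_le, rpow_def_of_pos hd, rpow_def_of_pos hv₀, exp_le_exp]
  exact mul_mul_rpow_le_mul_sq_div_four (by positivity) hb₁ (by positivity) hL
    r.cast_nonneg ((mul_nonneg r.cast_nonneg hL).trans hX_low) hX_upp hr_large

/-- Runtime bound in the general quasi-polynomial reduction: for large enough `v`, with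
`r = ⌈√((16q)^(m+2) (log v)^m)⌉` and any feature dimension `d` with `v^r ≤ d ≤ v^(2r)`,
one has `v^(r²/4) ≥ d^(q (log d)^(m/(m+2)))`. -/
theorem general_runtime_bound (m q : ℕ) (hq : 1 ≤ q) :
    ∃ N : ℕ, ∀ v : ℕ, N ≤ v →
      ∀ d : ℝ,
        (v : ℝ) ^ (⌈Real.sqrt ((16 * q : ℝ) ^ (m + 2) * (Real.log v) ^ m)⌉₊) ≤ d →
        d ≤ (v : ℝ) ^ (2 * ⌈Real.sqrt ((16 * q : ℝ) ^ (m + 2) * (Real.log v) ^ m)⌉₊) →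
        (v : ℝ) ^ ((⌈Real.sqrt ((16 * q : ℝ) ^ (m + 2) * (Real.log v) ^ m)⌉₊ : ℝ) ^ 2 / 4) ≥
          d ^ ((q : ℝ) * (Real.log d) ^ ((m : ℝ) / ((m : ℝ) + 2))) :=
  general_runtime_bound_general m q
end

section
/- Let v ≥ 1 and H, r, l be natural numbers, let i₁, i₂ : Fin v, and let w : Fin v → ℝ be a fixed vector with coordinates in {-1, 1}. Then there exists a coefficient vector c indexed by tuples of length at most 2r, namely c : (Σ k : Fin (2*r+1), (Fin k → Fin v)) → ℝ, such that for every w* : Fin v → ℝ with coordinates in {-1, 1}, ((1 : ℝ) - (l + (v - ∑_{i} w i * w* i)/2 + 2 * (if w i₁ = w* i₁ then (1:ℝ) else 0) * (if w i₂ = w* i₂ then (1:ℝ) else 0)) / (H + v))^r = ∑_{(k, f)} c (k, f) * ∏_{j : Fin k} w* (f j). That is, the optimal value function of the intermediate states in the two-action MDP, (1 - (l + dist(w,w*) + 2·𝟙{w_{i₁} = w*_{i₁}}·𝟙{w_{i₂} = w*_{i₂}})/(H+v))^r, is a linear combination of monomials in the coordinates of w* of degree at most 2r. -/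
/-!
Each indicator `𝟙{w i = w* i}` agrees on sign vectors with the affine function
`(1 + w i · w* i)/2`, so there the base of the `r`-th power is a polynomial function of degree
at most `2` in the coordinates of `w*`. The span of the tuple monomials `x ↦ ∏ j, x (f j)`,
`f : Fin k → ι` with `k ≤ d`, is closed under multiplication with degrees adding (concatenate
the tuples), so the `r`-th power lies in this span for `d = 2r`.
-/

open Submodule

section LowDegree

variable (R : Type*) {ι : Type*} [CommSemiring R]

def tupleMonomial {k : ℕ} (f : Fin k → ι) : (ι → R) → R := fun x => ∏ j, x (f j)

variable (ι) in
def lowDegreeSpan (d : ℕ) : Submodule R ((ι → R) → R) :=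
  span R (Set.range fun p : Σ k : Fin (d + 1), (Fin k → ι) => tupleMonomial R p.2)

variable {R}

theorem tupleMonomial_mem_lowDegreeSpan {d k : ℕ} (hk : k ≤ d) (f : Fin k → ι) :
    tupleMonomial R f ∈ lowDegreeSpan R ι d :=
  subset_span ⟨⟨⟨k, Nat.lt_succ_of_le hk⟩, f⟩, rfl⟩

theorem one_mem_lowDegreeSpan (d : ℕ) : (1 : (ι → R) → R) ∈ lowDegreeSpan R ι d := by
  convert tupleMonomial_mem_lowDegreeSpan (R := R) (Nat.zero_le d) (Fin.elim0 : Fin 0 → ι)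
  ext x
  simp [tupleMonomial]

theorem eval_mem_lowDegreeSpan (i : ι) {d : ℕ} (hd : 1 ≤ d) :
    Function.eval i ∈ lowDegreeSpan R ι d := by
  convert tupleMonomial_mem_lowDegreeSpan (R := R) hd ![i]
  ext x
  simp [tupleMonomial]

theorem tupleMonomial_mul {k m : ℕ} (f : Fin k → ι) (g : Fin m → ι) :
    tupleMonomial R f * tupleMonomial R g = tupleMonomial R (Fin.append f g) := by
  ext x
  simp [tupleMonomial, Fin.prod_univ_add]

theorem mul_mem_lowDegreeSpan {d e n : ℕ} (hn : d + e ≤ n) {F G : (ι → R) → R}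
    (hF : F ∈ lowDegreeSpan R ι d) (hG : G ∈ lowDegreeSpan R ι e) :
    F * G ∈ lowDegreeSpan R ι n := by
  have hle : lowDegreeSpan R ι d * lowDegreeSpan R ι e ≤ lowDegreeSpan R ι n := by
    rw [lowDegreeSpan, lowDegreeSpan, span_mul_span, span_le]
    rintro _ ⟨_, ⟨p, rfl⟩, _, ⟨q, rfl⟩, rfl⟩
    show tupleMonomial R p.2 * tupleMonomial R q.2 ∈ _
    rw [tupleMonomial_mul]
    exact tupleMonomial_mem_lowDegreeSpan (by omega) _
  exact hle (mul_mem_mul hF hG)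

theorem pow_mem_lowDegreeSpan {d : ℕ} {F : (ι → R) → R} (hF : F ∈ lowDegreeSpan R ι d) (n : ℕ) :
    F ^ n ∈ lowDegreeSpan R ι (d * n) := by
  induction n with
  | zero =>
    rw [pow_zero]
    exact one_mem_lowDegreeSpan _
  | succ n ih =>
    rw [pow_succ]
    exact mul_mem_lowDegreeSpan (Nat.mul_succ d n).ge ih hF

theorem exists_eq_sum_tupleMonomial [Fintype ι] [DecidableEq ι] {d : ℕ} {F : (ι → R) → R}
    (hF : F ∈ lowDegreeSpan R ι d) :
    ∃ c : (Σ k : Fin (d + 1), (Fin k → ι)) → R, ∀ x, F x = ∑ p, c p * ∏ j, x (p.2 j) := by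
  obtain ⟨c, rfl⟩ := (mem_span_range_iff_exists_fun R).mp hF
  exact ⟨c, fun x => by simp [tupleMonomial]⟩

end LowDegree

theorem ite_eq_one_zero_of_sign {a b : ℝ} (ha : a = -1 ∨ a = 1) (hb : b = -1 ∨ b = 1) :
    (if a = b then (1 : ℝ) else 0) = (1 + a * b) / 2 := by
  rcases ha with rfl | rfl <;> rcases hb with rfl | rfl <;> norm_num

theorem intermediate_value_linear_in_features_general {v H r l : ℕ}
    (i₁ i₂ : Fin v) (w : Fin v → ℝ) (hw : ∀ i, w i = -1 ∨ w i = 1) :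
    ∃ c : (Σ k : Fin (2 * r + 1), (Fin k → Fin v)) → ℝ,
      ∀ wstar : Fin v → ℝ, (∀ i, wstar i = -1 ∨ wstar i = 1) →
        ((1 : ℝ) - ((l : ℝ) + ((v : ℝ) - ∑ i, w i * wstar i) / 2 +
              2 * (if w i₁ = wstar i₁ then (1 : ℝ) else 0) *
                (if w i₂ = wstar i₂ then (1 : ℝ) else 0)) / ((H : ℝ) + (v : ℝ))) ^ r =
          ∑ p : (Σ k : Fin (2 * r + 1), (Fin k → Fin v)), c p * ∏ j, wstar (p.2 j) := by
  have hB : ∀ i, 1 + w i • Function.eval i ∈ lowDegreeSpan ℝ (Fin v) 1 := fun i =>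
    add_mem (one_mem_lowDegreeSpan 1) (smul_mem _ _ (eval_mem_lowDegreeSpan i le_rfl))
  have hQ : 1 - ((H : ℝ) + v)⁻¹ • (((l : ℝ) + v / 2) • 1 - (2⁻¹ : ℝ) • ∑ i, w i • Function.eval i
      + (2⁻¹ : ℝ) • ((1 + w i₁ • Function.eval i₁) * (1 + w i₂ • Function.eval i₂)))
        ∈ lowDegreeSpan ℝ (Fin v) 2 :=
    sub_mem (one_mem_lowDegreeSpan 2) <| smul_mem _ _ <| add_mem
      (sub_mem (smul_mem _ _ (one_mem_lowDegreeSpan 2))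
        (smul_mem _ _ (sum_mem fun i _ => smul_mem _ _ (eval_mem_lowDegreeSpan i one_le_two))))
      (smul_mem _ _ (mul_mem_lowDegreeSpan one_add_one_eq_two.le (hB i₁) (hB i₂)))
  obtain ⟨c, hc⟩ := exists_eq_sum_tupleMonomial (pow_mem_lowDegreeSpan hQ r)
  refine ⟨c, fun wstar hwstar => ?_⟩
  rw [← hc, ite_eq_one_zero_of_sign (hw i₁) (hwstar i₁),
    ite_eq_one_zero_of_sign (hw i₂) (hwstar i₂)]
  simp only [smul_add, Pi.pow_apply, Pi.sub_apply, Pi.one_apply, Pi.add_apply, Pi.smul_apply,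
    smul_eq_mul, mul_one, Finset.sum_apply, Function.eval, Pi.mul_apply]
  ring

/-- The optimal value function of the intermediate states of the two-action MDP,
`(1 - (l + dist(w, wstar) + 2·𝟙{w i₁ = wstar i₁}·𝟙{w i₂ = wstar i₂})/(H + v))^r`,
viewed via `dist(w, wstar) = (v - ⟨w, wstar⟩)/2`, is a linear combination of monomials in
the coordinates of `wstar` of degree at most `2r`. -/
theorem intermediate_value_linear_in_features {v H r l : ℕ} (hv : 1 ≤ v)
    (i₁ i₂ : Fin v) (w : Fin v → ℝ) (hw : ∀ i, w i = -1 ∨ w i = 1) :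
    ∃ c : (Σ k : Fin (2 * r + 1), (Fin k → Fin v)) → ℝ,
      ∀ wstar : Fin v → ℝ, (∀ i, wstar i = -1 ∨ wstar i = 1) →
        ((1 : ℝ) - ((l : ℝ) + ((v : ℝ) - ∑ i, w i * wstar i) / 2 +
              2 * (if w i₁ = wstar i₁ then (1 : ℝ) else 0) *
                (if w i₂ = wstar i₂ then (1 : ℝ) else 0)) / ((H : ℝ) + (v : ℝ))) ^ r =
          ∑ p : (Σ k : Fin (2 * r + 1), (Fin k → Fin v)), c p * ∏ j, wstar (p.2 j) :=
  intermediate_value_linear_in_features_general i₁ i₂ w hw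
end
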